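/- arXiv:1304.1236 — 3 statements merged into one kernel-verified Lean document; each statement's English description precedes it below -/
import Mathlib

section
/- Let (A_n, φ_n), n = 1,2,…, and (A, φ) be algebraic probability spaces, and fix an integer k ≥ 1. Let a_n, z_{1n}, …, z_{kn} ∈ A_n be self-adjoint elements, a ∈ A self-adjoint, and ζ_1,…,ζ_k ∈ ℝ. Assume: (i) a_n converges to a in moments, and for each i, z_{in} converges in moments to ζ_i·1 (i.e. lim_n φ_n(z_{in}^m) = ζ_i^m for all m ≥ 1); (ii) each φ_n is tracial; (iii) the family {a_n, z_{1n}, …, z_{kn}} has uniformly bounded mixed moments, i.e. for each m ≥ 1, the supremum over n of the maximum of |φ_n(w)| over all words w of length m in the letters a_n, z_{1n}, …, z_{kn} is finite. Then for every noncommutative polynomial p(x, y_1, …, y_k) with complex coefficients and every m ≥ 1, lim_{n→∞} φ_n( p(a_n, z_{1n}, …, z_{kn})^m ) = φ( p(a, ζ_1·1, …, ζ_k·1)^m ). -/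
/-!
Traciality moves any letter `z_i` of a word to the end, where it is replaced by the scalar `ζ_i`
at the cost of an error term `φ_n(W (z_i - ζ_i))`. By the Cauchy–Schwarz inequality for the
positive form `(x, y) ↦ φ_n(x⋆ y)`, this error is at most `φ_n(W W⋆)^½ φ_n((z_i - ζ_i)²)^½`:
the first factor is a mixed moment, hence bounded in `n`, and the second tends to `0` because the
first two moments of `z_i` converge to those of `ζ_i`. Removing the letters `z_i` one at a time
reduces every word to a power of `a_n`, and linearity extends the convergence to polynomials.
-/

open Filter Topology
open scoped ComplexOrder

namespace LinearMap

variable {A : Type*} [Ring A] [Algebra ℂ A] [StarRing A] [StarModule ℂ A] (ψ : A →ₗ[ℂ] ℂ)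

theorem conj_apply_star_mul (hψ : ∀ a, 0 ≤ ψ (star a * a)) (x y : A) :
    starRingEnd ℂ (ψ (star x * y)) = ψ (star y * x) := by
  -- polarization: `ψ` is real on `(x + y)⋆(x + y)` and on `(x + i y)⋆(x + i y)`
  have him : ∀ a : A, (ψ (star a * a)).im = 0 := fun a => (Complex.nonneg_iff.1 (hψ a)).2.symm
  have h₁ := him (x + y)
  have h₂ := him (x + Complex.I • y)
  simp only [star_add, star_smul, add_mul, mul_add, smul_mul_assoc, mul_smul_comm, map_add,
    map_smul, smul_eq_mul, Complex.add_im, him, Complex.star_def, Complex.conj_I, Complex.mul_im,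
    Complex.mul_re, Complex.neg_re, Complex.neg_im, Complex.I_re, Complex.I_im] at h₁ h₂
  apply Complex.ext <;> simp only [Complex.conj_re, Complex.conj_im] <;> linarith

abbrev starMulCore (hψ : ∀ a, 0 ≤ ψ (star a * a)) : PreInnerProductSpace.Core ℂ A where
  inner x y := ψ (star x * y)
  conj_inner_symm x y := conj_apply_star_mul ψ hψ y x
  re_inner_nonneg x := (Complex.nonneg_iff.1 (hψ x)).1
  add_left x y z := by simp only [star_add, add_mul, map_add]
  smul_left x y r := by
    simp only [star_smul, smul_mul_assoc, map_smul, smul_eq_mul, Complex.star_def]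

theorem norm_apply_star_mul_sq_le (hψ : ∀ a, 0 ≤ ψ (star a * a)) (x y : A) :
    ‖ψ (star x * y)‖ ^ 2 ≤ (ψ (star x * x)).re * (ψ (star y * y)).re := by
  have h := @InnerProductSpace.Core.inner_mul_inner_self_le ℂ A _ _ _ (starMulCore ψ hψ) x y
  change ‖ψ (star x * y)‖ * ‖ψ (star y * x)‖ ≤ (ψ (star x * x)).re * (ψ (star y * y)).re at h
  rwa [← conj_apply_star_mul ψ hψ x y, Complex.norm_conj, ← sq] at h

end LinearMap

theorem star_list_prod {M : Type*} [Monoid M] [StarMul M] (l : List M) :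
    star l.prod = (l.map star).reverse.prod := by
  induction l with
  | nil => simp
  | cons x l ih => simp [ih]

theorem list_prod_mul_star_list_prod {ι M : Type*} [Monoid M] [StarMul M] (f : ι → M)
    (hf : ∀ i, IsSelfAdjoint (f i)) (w : List ι) :
    (w.map f).prod * star (w.map f).prod = ((w ++ w.reverse).map f).prod := by
  simp [star_list_prod, Function.comp_def, (hf _).star_eq]

theorem apply_mul_mul_eq_of_tracial {A : Type*} [Ring A] [Algebra ℂ A] (ψ : A →ₗ[ℂ] ℂ)
    (hψ : ∀ x y, ψ (x * y) = ψ (y * x)) (u z v : A) (s : ℂ) :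
    ψ (u * (z * v)) = s * ψ (u * v) + ψ (v * u * (z - s • 1)) := by
  rw [mul_sub, mul_smul_comm, mul_one, map_sub, map_smul, hψ u, hψ u, mul_assoc, hψ z]
  simp only [smul_eq_mul]
  ring

section Sequences

variable {A : ℕ → Type*} [∀ n, Ring (A n)] [∀ n, Algebra ℂ (A n)]
  [∀ n, StarRing (A n)] [∀ n, StarModule ℂ (A n)] (ψ : ∀ n, A n →ₗ[ℂ] ℂ)

theorem tendsto_apply_star_sub_mul_sub_of_tendsto (hψ : ∀ n, ψ n 1 = 1) (z : ∀ n, A n)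
    (hz : ∀ n, IsSelfAdjoint (z n)) (s : ℝ) (h₁ : Tendsto (fun n => ψ n (z n)) atTop (𝓝 s))
    (h₂ : Tendsto (fun n => ψ n (z n ^ 2)) atTop (𝓝 (s ^ 2))) :
    Tendsto (fun n => ψ n (star (z n - (s : ℂ) • 1) * (z n - (s : ℂ) • 1))) atTop (𝓝 0) := by
  have expand : ∀ n, ψ n (star (z n - (s : ℂ) • 1) * (z n - (s : ℂ) • 1)) =
      ψ n (z n ^ 2) - 2 * s * ψ n (z n) + s ^ 2 := by
    intro n
    rw [star_sub, (hz n).star_eq, star_smul, star_one, Complex.star_def, Complex.conj_ofReal]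
    simp only [sub_mul, mul_sub, smul_mul_assoc, mul_smul_comm, one_mul, mul_one,
      map_sub, map_smul, smul_eq_mul, hψ n, sq]
    ring
  simp only [expand]
  convert (h₂.sub (h₁.const_mul (2 * (s : ℂ)))).add_const ((s : ℂ) ^ 2) using 2
  ring

theorem tendsto_apply_mul_of_tendsto_apply_star_mul_self (hψ : ∀ n a, 0 ≤ ψ n (star a * a))
    (w c : ∀ n, A n) (hw : ∃ C, ∀ n, ‖ψ n (w n * star (w n))‖ ≤ C)
    (hc : Tendsto (fun n => ψ n (star (c n) * c n)) atTop (𝓝 0)) :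
    Tendsto (fun n => ψ n (w n * c n)) atTop (𝓝 0) := by
  obtain ⟨C, hC⟩ := hw
  have bound : ∀ n, ‖ψ n (w n * c n)‖ ^ 2 ≤ C * ‖ψ n (star (c n) * c n)‖ := by
    intro n
    have h := (ψ n).norm_apply_star_mul_sq_le (hψ n) (star (w n)) (c n)
    rw [star_star] at h
    refine h.trans (mul_le_mul ((Complex.re_le_norm _).trans (hC n)) (Complex.re_le_norm _)
      (Complex.nonneg_iff.1 (hψ n _)).1 ((norm_nonneg _).trans (hC n)))
  have hsq : Tendsto (fun n => ‖ψ n (w n * c n)‖ ^ 2) atTop (𝓝 0) :=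
    squeeze_zero (fun n => by positivity) bound (by simpa using hc.norm.const_mul C)
  rw [tendsto_zero_iff_norm_tendsto_zero]
  simpa using hsq.sqrt

variable {B : Type*} [Ring B] [Algebra ℂ B] (φ : B →ₗ[ℂ] ℂ)

theorem tendsto_apply_list_prod_map {ι : Type*} (x : ∀ n, ι → A n) (y : ι → B) (i₀ : ι)
    (s : ι → ℂ) (hψ_pos : ∀ n a, 0 ≤ ψ n (star a * a))
    (hψ_tracial : ∀ n, ∀ a b : A n, ψ n (a * b) = ψ n (b * a))
    (hx : ∀ n i, IsSelfAdjoint (x n i))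
    (hbdd : ∀ w : List ι, ∃ C, ∀ n, ‖ψ n ((w.map (x n)).prod)‖ ≤ C)
    (hpow : ∀ m, Tendsto (fun n => ψ n (x n i₀ ^ m)) atTop (𝓝 (φ (y i₀ ^ m))))
    (hy : ∀ i ≠ i₀, y i = s i • 1)
    (hscalar : ∀ i ≠ i₀,
      Tendsto (fun n => ψ n (star (x n i - s i • 1) * (x n i - s i • 1))) atTop (𝓝 0))
    (w : List ι) :
    Tendsto (fun n => ψ n ((w.map (x n)).prod)) atTop (𝓝 (φ ((w.map y).prod))) := by
  by_cases hw : ∀ i ∈ w, i = i₀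
  · rw [List.eq_replicate_iff.2 ⟨rfl, hw⟩]
    simpa only [List.map_replicate, List.prod_replicate] using hpow w.length
  push Not at hw
  obtain ⟨i, hiw, hi⟩ := hw
  obtain ⟨u, v, rfl⟩ := List.append_of_mem hiw
  have hx_word : ∀ n, ψ n (((u ++ i :: v).map (x n)).prod) =
      s i * ψ n (((u ++ v).map (x n)).prod) +
        ψ n (((v ++ u).map (x n)).prod * (x n i - s i • 1)) := by
    intro n
    simp only [List.map_append, List.map_cons, List.prod_append, List.prod_cons]
    exact apply_mul_mul_eq_of_tracial (ψ n) (hψ_tracial n) _ _ _ _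
  have hy_word : φ (((u ++ i :: v).map y).prod) = s i * φ (((u ++ v).map y).prod) := by
    simp only [List.map_append, List.map_cons, List.prod_append, List.prod_cons, hy i hi,
      smul_mul_assoc, one_mul, mul_smul_comm, map_smul, smul_eq_mul]
  have herror : Tendsto (fun n => ψ n (((v ++ u).map (x n)).prod * (x n i - s i • 1)))
      atTop (𝓝 0) := by
    refine tendsto_apply_mul_of_tendsto_apply_star_mul_self ψ hψ_pos _ _ ?_ (hscalar i hi)
    simpa only [list_prod_mul_star_list_prod _ (hx _)] using hbdd ((v ++ u) ++ (v ++ u).reverse)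
  have ih :=
    tendsto_apply_list_prod_map x y i₀ s hψ_pos hψ_tracial hx hbdd hpow hy hscalar (u ++ v)
  rw [hy_word]
  simpa only [hx_word, add_zero] using (ih.const_mul (s i)).add herror
termination_by w.length
decreasing_by simp_all

end Sequences

theorem tendsto_apply_freeAlgebra_lift {X : Type*} {A : ℕ → Type*} [∀ n, Semiring (A n)]
    [∀ n, Algebra ℂ (A n)] {B : Type*} [Semiring B] [Algebra ℂ B]
    (ψ : ∀ n, A n →ₗ[ℂ] ℂ) (φ : B →ₗ[ℂ] ℂ) (f : ∀ n, X → A n) (g : X → B)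
    (hwords : ∀ w : List X,
      Tendsto (fun n => ψ n ((w.map (f n)).prod)) atTop (𝓝 (φ ((w.map g).prod))))
    (p : FreeAlgebra ℂ X) :
    Tendsto (fun n => ψ n (FreeAlgebra.lift ℂ (f n) p)) atTop
      (𝓝 (φ (FreeAlgebra.lift ℂ g p))) := by
  have hp : p ∈ Submodule.span ℂ
      (Submonoid.closure (Set.range (FreeAlgebra.ι ℂ (X := X))) : Set (FreeAlgebra ℂ X)) := by
    rw [← Algebra.adjoin_eq_span, FreeAlgebra.adjoin_range_ι]
    trivial
  induction hp using Submodule.span_induction with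
  | mem q hq =>
    rw [← FreeMonoid.mrange_lift] at hq
    obtain ⟨w, rfl⟩ := hq
    simpa [FreeMonoid.lift_apply, map_list_prod, Function.comp_def] using hwords w.toList
  | zero => simp
  | add q r _ _ hq hr => simpa using hq.add hr
  | smul c q _ hq => simpa using hq.const_mul c

theorem moments_of_noncommutative_polynomial_converge_general
    (A : ℕ → Type*) [∀ n, Ring (A n)] [∀ n, Algebra ℂ (A n)]
    [∀ n, StarRing (A n)] [∀ n, StarModule ℂ (A n)]
    (B : Type*) [Ring B] [Algebra ℂ B]
    (φn : ∀ n, A n →ₗ[ℂ] ℂ) (φ : B →ₗ[ℂ] ℂ)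
    (hφn_unital : ∀ n, φn n 1 = 1) (hφn_pos : ∀ n a, 0 ≤ φn n (star a * a))
    (hφ_unital : φ 1 = 1)
    (k : ℕ)
    (a : ∀ n, A n) (z : Fin k → ∀ n, A n) (b : B) (ζ : Fin k → ℝ)
    (ha_sa : ∀ n, star (a n) = a n) (hz_sa : ∀ i n, star (z i n) = z i n)
    -- (i) convergence in moments
    (hconv_a : ∀ m : ℕ, 1 ≤ m → Tendsto (fun n => φn n (a n ^ m)) atTop (𝓝 (φ (b ^ m))))
    (hconv_z : ∀ i, ∀ m : ℕ, 1 ≤ m →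
      Tendsto (fun n => φn n (z i n ^ m)) atTop (𝓝 ((ζ i : ℂ) ^ m)))
    -- (ii) traciality
    (htracial : ∀ n, ∀ x y : A n, φn n (x * y) = φn n (y * x))
    -- (iii) uniformly bounded mixed moments: words of length `m` in the letters
    -- `a_n, z_{1n}, …, z_{kn}` have state values bounded uniformly in `n`
    (hbdd : ∀ m : ℕ, 1 ≤ m → ∃ C : ℝ, ∀ n, ∀ w : List (Fin (k + 1)), w.length = m →
      ‖φn n ((w.map fun i =>
        (Fin.cases (a n) (fun j => z j n) i : A n)).prod)‖ ≤ C)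
    (p : FreeAlgebra ℂ (Fin (k + 1))) (m : ℕ) :
    Tendsto
      (fun n => φn n ((FreeAlgebra.lift ℂ
        (fun i => (Fin.cases (a n) (fun j => z j n) i : A n)) p) ^ m))
      atTop
      (𝓝 (φ ((FreeAlgebra.lift ℂ
        (fun i => (Fin.cases b (fun j => (ζ j : ℂ) • (1 : B)) i : B)) p) ^ m))) := by
  have hpow : ∀ m, Tendsto (fun n => φn n (a n ^ m)) atTop (𝓝 (φ (b ^ m))) := by
    rintro (_ | m)
    · simp [hφn_unital, hφ_unital]
    · exact hconv_a _ m.succ_pos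
  let x : ∀ n, Fin (k + 1) → A n := fun n => Fin.cases (a n) (fun j => z j n)
  let y : Fin (k + 1) → B := Fin.cases b (fun j => (ζ j : ℂ) • 1)
  let s : Fin (k + 1) → ℂ := Fin.cases 0 (fun j => (ζ j : ℂ))
  have hbdd_words : ∀ w : List (Fin (k + 1)), ∃ C : ℝ, ∀ n, ‖φn n ((w.map (x n)).prod)‖ ≤ C := by
    rintro (_ | ⟨i, w⟩)
    · exact ⟨1, by simp [hφn_unital]⟩
    · obtain ⟨C, hC⟩ := hbdd _ (List.length_pos_of_ne_nil (List.cons_ne_nil i w))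
      exact ⟨C, fun n => hC n _ rfl⟩
  have hscalar : ∀ j : Fin k, Tendsto (fun n => φn n (star (z j n - (ζ j : ℂ) • 1) *
      (z j n - (ζ j : ℂ) • 1))) atTop (𝓝 0) := fun j =>
    tendsto_apply_star_sub_mul_sub_of_tendsto φn hφn_unital (z j) (hz_sa j) (ζ j)
      (by simpa using hconv_z j 1 le_rfl) (hconv_z j 2 one_le_two)
  have hwords := tendsto_apply_list_prod_map φn φ x y 0 s hφn_pos htracial
    (fun n => Fin.cases (ha_sa n) (fun j => hz_sa j n)) hbdd_words hpow
    (fun i hi => by obtain ⟨j, rfl⟩ := Fin.exists_succ_eq.2 hi; rfl)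
    (fun i hi => by obtain ⟨j, rfl⟩ := Fin.exists_succ_eq.2 hi; exact hscalar j)
  simpa only [map_pow] using tendsto_apply_freeAlgebra_lift φn φ x y hwords (p ^ m)

/-- Proposition 2.2: convergence of mixed moments of noncommutative polynomials.
Given algebraic probability spaces `(A_n, φ_n)` and `(B, φ)`, self-adjoint elements
`a_n, z_{1n}, …, z_{kn} ∈ A_n` and `b ∈ B`, real numbers `ζ_1, …, ζ_k`, such that
(i) `a_n → b` and `z_{in} → ζ_i·1` in moments, (ii) each `φ_n` is tracial, and
(iii) `{a_n, z_{1n}, …, z_{kn}}` have uniformly bounded mixed moments, the moments of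
`p(a_n, z_{1n}, …, z_kn)` converge to those of `p(b, ζ_1·1, …, ζ_k·1)` for every
noncommutative polynomial `p` (an element of the free `ℂ`-algebra on `k + 1` generators,
generator `0` standing for `x` and generator `i + 1` for `y_i`). -/
theorem moments_of_noncommutative_polynomial_converge
    (A : ℕ → Type*) [∀ n, Ring (A n)] [∀ n, Algebra ℂ (A n)]
    [∀ n, StarRing (A n)] [∀ n, StarModule ℂ (A n)]
    (B : Type*) [Ring B] [Algebra ℂ B] [StarRing B] [StarModule ℂ B]
    (φn : ∀ n, A n →ₗ[ℂ] ℂ) (φ : B →ₗ[ℂ] ℂ)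
    (hφn_unital : ∀ n, φn n 1 = 1) (hφn_pos : ∀ n a, 0 ≤ φn n (star a * a))
    (hφ_unital : φ 1 = 1) (hφ_pos : ∀ x, 0 ≤ φ (star x * x))
    (k : ℕ) (hk : 1 ≤ k)
    (a : ∀ n, A n) (z : Fin k → ∀ n, A n) (b : B) (ζ : Fin k → ℝ)
    (ha_sa : ∀ n, star (a n) = a n) (hz_sa : ∀ i n, star (z i n) = z i n)
    (hb_sa : star b = b)
    -- (i) convergence in moments
    (hconv_a : ∀ m : ℕ, 1 ≤ m → Tendsto (fun n => φn n (a n ^ m)) atTop (𝓝 (φ (b ^ m))))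
    (hconv_z : ∀ i, ∀ m : ℕ, 1 ≤ m →
      Tendsto (fun n => φn n (z i n ^ m)) atTop (𝓝 ((ζ i : ℂ) ^ m)))
    -- (ii) traciality
    (htracial : ∀ n, ∀ x y : A n, φn n (x * y) = φn n (y * x))
    -- (iii) uniformly bounded mixed moments: words of length `m` in the letters
    -- `a_n, z_{1n}, …, z_{kn}` have state values bounded uniformly in `n`
    (hbdd : ∀ m : ℕ, 1 ≤ m → ∃ C : ℝ, ∀ n, ∀ w : List (Fin (k + 1)), w.length = m →
      ‖φn n ((w.map fun i =>
        (Fin.cases (a n) (fun j => z j n) i : A n)).prod)‖ ≤ C)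
    (p : FreeAlgebra ℂ (Fin (k + 1))) (m : ℕ) (hm : 1 ≤ m) :
    Tendsto
      (fun n => φn n ((FreeAlgebra.lift ℂ
        (fun i => (Fin.cases (a n) (fun j => z j n) i : A n)) p) ^ m))
      atTop
      (𝓝 (φ ((FreeAlgebra.lift ℂ
        (fun i => (Fin.cases b (fun j => (ζ j : ℂ) • (1 : B)) i : B)) p) ^ m))) :=
  moments_of_noncommutative_polynomial_converge_general A B φn φ hφn_unital hφn_pos hφ_unital k a z
    b ζ ha_sa hz_sa hconv_a hconv_z htracial hbdd p m
end

section
/- (Commutative law of large numbers.) Let (A, φ) be an algebraic probability space and b ∈ A a self-adjoint element. For N ≥ 1 let b(i) = 1⊗…⊗b⊗…⊗1 ∈ A^{⊗N} (b at the i-th tensor factor) and b^{(N,1)} = Σ_{i=1}^N b(i). Then b^{(N,1)}/N converges in moments, with respect to the product states φ^{⊗N}, to φ(b)·1; that is, for every integer m ≥ 1, lim_{N→∞} φ^{⊗N}( (b^{(N,1)}/N)^m ) = φ(b)^m. -/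
open scoped TensorProduct ComplexOrder
open Filter Topology

noncomputable section

/-- The product state `φ^{⊗N}` on the `N`-fold algebraic tensor power `A^{⊗N}`,
determined by `φ^{⊗N}(a_1 ⊗ ⋯ ⊗ a_N) = φ(a_1) ⋯ φ(a_N)`. -/
def prodState {A : Type*} [Ring A] [Algebra ℂ A] (φ : A →ₗ[ℂ] ℂ) (N : ℕ) :
    (⨂[ℂ] _ : Fin N, A) →ₗ[ℂ] ℂ :=
  PiTensorProduct.lift ((MultilinearMap.mkPiAlgebra ℂ (Fin N) ℂ).compLinearMap fun _ => φ)

/-- `b(i) = 1 ⊗ ⋯ ⊗ b ⊗ ⋯ ⊗ 1 ∈ A^{⊗N}` with `b` at the `i`-th tensor factor. -/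
def elemAt {A : Type*} [Ring A] [Algebra ℂ A] (b : A) (N : ℕ) (i : Fin N) :
    ⨂[ℂ] _ : Fin N, A :=
  PiTensorProduct.tprod ℂ (Function.update (fun _ => (1 : A)) i b)

/-- `b^{(N,n)} = ∑_{1 ≤ i_1 < ⋯ < i_n ≤ N} b(i_1) ⋯ b(i_n)` (and `b^{(N,0)} = 1`). -/
def bPow {A : Type*} [Ring A] [Algebra ℂ A] (b : A) (N n : ℕ) : ⨂[ℂ] _ : Fin N, A :=
  ∑ s ∈ Finset.powersetCard n (Finset.univ : Finset (Fin N)),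
    ((s.sort (· ≤ ·)).map (elemAt b N)).prod

/-- `F^{(N,n)}(y)`: the sum, over all ways to choose `n` distinct tensor positions and
to place `y` at one of them and `b` at the other `n - 1` (with `1` elsewhere), of the
corresponding elementary tensors. -/
def Fsum {A : Type*} [Ring A] [Algebra ℂ A] (b y : A) (N n : ℕ) : ⨂[ℂ] _ : Fin N, A :=
  ∑ s ∈ Finset.powersetCard n (Finset.univ : Finset (Fin N)), ∑ i ∈ s,
    PiTensorProduct.tprod ℂ (fun j => if j = i then y else if j ∈ s then b else 1)

/-! Expanding `(∑ᵢ b(i))^m` in the non-commutative algebra `A^{⊗N}` gives a sum over all maps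
`f : Fin m → Fin N` of elementary tensors, and `φ^{⊗N}` sends the one indexed by `f` to
`∏ⱼ φ(b^{|f⁻¹(j)|})`. This equals `φ(b)^m` when `f` is injective, and is bounded independently of
`N` otherwise. Since the injective maps number `N(N-1)⋯(N-m+1) ~ N^m`, the `N^{-m}`-weighted sum
tends to `φ(b)^m`. -/

theorem sum_pow_eq_sum_prod_ofFn {R ι : Type*} [Semiring R] [Fintype ι] (a : ι → R) (m : ℕ) :
    (∑ i, a i) ^ m = ∑ f : Fin m → ι, (List.ofFn fun k => a (f k)).prod := by
  induction m with
  | zero => simp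
  | succ m ih =>
    rw [pow_succ', ih, Finset.sum_mul_sum, ← (Fin.consEquiv fun _ => ι).sum_comp,
      Fintype.sum_prod_type]
    simp [List.ofFn_succ, Fin.consEquiv_apply]

section ListCount

variable {ι M : Type*} [Fintype ι] [DecidableEq ι] (u : ℕ → M) (l : List ι)

theorem prod_count_eq_prod_toFinset [CommMonoid M] (hu : u 0 = 1) :
    ∏ j, u (l.count j) = ∏ j ∈ l.toFinset, u (l.count j) :=
  (Finset.prod_subset (Finset.subset_univ _) fun j _ hj => by
    rw [List.count_eq_zero_of_not_mem (by simpa using hj), hu]).symm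

theorem prod_count_of_nodup [CommMonoid M] (hu : u 0 = 1) (hl : l.Nodup) :
    ∏ j, u (l.count j) = u 1 ^ l.length := by
  rw [prod_count_eq_prod_toFinset u l hu, ← List.toFinset_card_of_nodup hl]
  exact Finset.prod_eq_pow_card fun j hj => by
    rw [List.count_eq_one_of_mem hl (List.mem_toFinset.1 hj)]

theorem norm_prod_count_le [NormedCommRing M] [NormOneClass M] (hu : u 0 = 1) {C : ℝ}
    (hC : 1 ≤ C) (huC : ∀ k ≤ l.length, ‖u k‖ ≤ C) :
    ‖∏ j, u (l.count j)‖ ≤ C ^ l.length := by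
  rw [prod_count_eq_prod_toFinset u l hu]
  calc ‖∏ j ∈ l.toFinset, u (l.count j)‖ ≤ ∏ j ∈ l.toFinset, ‖u (l.count j)‖ :=
        Finset.norm_prod_le _ _
    _ ≤ ∏ _j ∈ l.toFinset, C :=
        Finset.prod_le_prod (fun _ _ => norm_nonneg _) fun _ _ => huC _ List.count_le_length
    _ = C ^ l.toFinset.card := Finset.prod_const C
    _ ≤ C ^ l.length := pow_le_pow_right₀ hC (List.toFinset_card_le l)

end ListCount

section TensorPower

variable {A : Type*} [Ring A] [Algebra ℂ A]

theorem prodState_tprod (φ : A →ₗ[ℂ] ℂ) {N : ℕ} (f : Fin N → A) :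
    prodState φ N (PiTensorProduct.tprod ℂ f) = ∏ j, φ (f j) := by
  simp [prodState]

theorem list_prod_map_elemAt (b : A) {N : ℕ} (l : List (Fin N)) :
    (l.map (elemAt b N)).prod = PiTensorProduct.tprod ℂ fun j => b ^ l.count j := by
  induction l with
  | nil => simp [PiTensorProduct.one_def]; rfl
  | cons i l ih =>
    rw [List.map_cons, List.prod_cons, ih, elemAt, PiTensorProduct.tprod_mul_tprod]
    congr 1
    funext j
    rcases eq_or_ne j i with rfl | hji
    · simp [pow_succ']
    · simp [Function.update_of_ne hji, Ne.symm hji]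

theorem bPow_one (b : A) (N : ℕ) : bPow b N 1 = ∑ i, elemAt b N i := by
  rw [bPow, Finset.powersetCard_one, Finset.sum_map]
  simp [Finset.sort_singleton]

theorem prodState_bPow_one_pow (φ : A →ₗ[ℂ] ℂ) (b : A) (N m : ℕ) :
    prodState φ N (bPow b N 1 ^ m)
      = ∑ f : Fin m → Fin N, ∏ j, φ (b ^ (List.ofFn f).count j) := by
  simp only [bPow_one, sum_pow_eq_sum_prod_ofFn, map_sum]
  refine Finset.sum_congr rfl fun f _ => ?_
  rw [← prodState_tprod, ← list_prod_map_elemAt, List.map_ofFn]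
  rfl

end TensorPower

open Finset in
theorem tendsto_card_not_injective_div_pow (m : ℕ) :
    Tendsto (fun N : ℕ => (#{f : Fin m → Fin N | ¬ Function.Injective f} : ℝ) / N ^ m)
      atTop (𝓝 0) := by
  have hcard : ∀ N : ℕ, (#{f : Fin m → Fin N | ¬ Function.Injective f} : ℝ)
      = N ^ m - N.descFactorial m := by
    intro N
    have h := card_filter_add_card_filter_not (s := (univ : Finset (Fin m → Fin N)))
      Function.Injective
    rw [← Fintype.card_subtype, Fintype.card_congr (Equiv.subtypeInjectiveEquivEmbedding _ _),
      Fintype.card_embedding_eq, card_univ, Fintype.card_pi] at h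
    simp only [Fintype.card_fin, prod_const, card_univ] at h
    rw [eq_sub_iff_add_eq']
    exact_mod_cast h
  have hpos : ∀ᶠ N : ℕ in atTop, (N : ℝ) ^ m ≠ 0 := by
    filter_upwards [eventually_ge_atTop 1] with N hN
    positivity
  have hdesc : Tendsto (fun N : ℕ => (N.descFactorial m : ℝ) / N ^ m) atTop (𝓝 1) :=
    (Asymptotics.isEquivalent_iff_tendsto_one hpos).1 (isEquivalent_descFactorial m)
  have hsub := (tendsto_const_nhds (x := (1 : ℝ))).sub hdesc
  rw [sub_self] at hsub
  refine hsub.congr' ?_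
  filter_upwards [hpos] with N hN
  rw [hcard, sub_div, div_self hN]

open Finset in
theorem tendsto_average_of_eq_on_injective {𝕜 : Type*} [RCLike 𝕜] {m : ℕ}
    (g : ∀ N : ℕ, (Fin m → Fin N) → 𝕜) (c : 𝕜) (K : ℝ) (hg : ∀ N f, ‖g N f‖ ≤ K)
    (hinj : ∀ N f, Function.Injective f → g N f = c) :
    Tendsto (fun N : ℕ => (N : 𝕜)⁻¹ ^ m * ∑ f, g N f) atTop (𝓝 c) := by
  rw [tendsto_iff_norm_sub_tendsto_zero]
  have hbound := (tendsto_card_not_injective_div_pow m).mul_const (K + ‖c‖)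
  rw [zero_mul] at hbound
  refine squeeze_zero' (Eventually.of_forall fun _ => norm_nonneg _) ?_ hbound
  filter_upwards [eventually_ge_atTop 1] with N hN
  have hN0 : (N : 𝕜) ^ m ≠ 0 := pow_ne_zero _ (Nat.cast_ne_zero.2 (by omega))
  have herror : (N : 𝕜)⁻¹ ^ m * ∑ f, g N f - c
      = (N : 𝕜)⁻¹ ^ m * ∑ f with ¬ Function.Injective f, (g N f - c) := by
    have hvanish : ∑ f with ¬ Function.Injective f, (g N f - c) = ∑ f, (g N f - c) :=
      sum_filter_of_ne fun f _ hf hinjf => hf (by rw [hinj N f hinjf, sub_self])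
    rw [hvanish, sum_sub_distrib, sum_const, card_univ, Fintype.card_fun, Fintype.card_fin,
      Fintype.card_fin, nsmul_eq_mul, mul_sub, inv_pow, ← mul_assoc, Nat.cast_pow,
      inv_mul_cancel₀ hN0, one_mul]
  calc ‖(N : 𝕜)⁻¹ ^ m * ∑ f, g N f - c‖
      ≤ (N : ℝ)⁻¹ ^ m * ∑ f : Fin m → Fin N with ¬ Function.Injective f, ‖g N f - c‖ := by
        rw [herror, norm_mul, norm_pow, norm_inv, RCLike.norm_natCast]
        gcongr
        exact norm_sum_le _ _
    _ ≤ (N : ℝ)⁻¹ ^ m * ∑ f : Fin m → Fin N with ¬ Function.Injective f, (K + ‖c‖) := by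
        gcongr with f
        exact (norm_sub_le _ _).trans (add_le_add_left (hg N f) _)
    _ = (#{f : Fin m → Fin N | ¬ Function.Injective f} : ℝ) / N ^ m * (K + ‖c‖) := by
        rw [sum_const, nsmul_eq_mul, inv_pow]
        ring

theorem commutative_law_of_large_numbers_general
    {A : Type*} [Ring A] [Algebra ℂ A]
    (φ : A →ₗ[ℂ] ℂ) (hφ_unital : φ 1 = 1)
    (b : A) (m : ℕ) :
    Tendsto (fun N : ℕ => prodState φ N (((N : ℂ)⁻¹ • bPow b N 1) ^ m)) atTop
      (𝓝 (φ b ^ m)) := by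
  obtain ⟨C, hC⟩ := ((Set.finite_Iic m).image fun k => ‖φ (b ^ k)‖).bddAbove
  have hmoment : ∀ N : ℕ, prodState φ N (((N : ℂ)⁻¹ • bPow b N 1) ^ m)
      = (N : ℂ)⁻¹ ^ m * ∑ f : Fin m → Fin N, ∏ j, φ (b ^ (List.ofFn f).count j) := fun N => by
    rw [smul_pow, map_smul, smul_eq_mul, prodState_bPow_one_pow]
  have hunit : φ (b ^ 0) = 1 := by rw [pow_zero, hφ_unital]
  simp only [hmoment]
  refine tendsto_average_of_eq_on_injective _ _ (max C 1 ^ m) (fun N f => ?_) fun N f hf => ?_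
  · simpa using norm_prod_count_le (fun k => φ (b ^ k)) (List.ofFn f) hunit (le_max_right C 1)
      fun k hk => le_max_of_le_left (hC ⟨k, by simpa using hk, rfl⟩)
  · simpa using prod_count_of_nodup (fun k => φ (b ^ k)) (List.ofFn f) hunit (List.nodup_ofFn.2 hf)

/-- **Commutative law of large numbers** (Theorem 3.1). For a self-adjoint element `b`
of an algebraic probability space `(A, φ)`, the averages `b^{(N,1)}/N` converge in
moments (w.r.t. the product states `φ^{⊗N}`) to `φ(b)·1`. -/
theorem commutative_law_of_large_numbers
    {A : Type*} [Ring A] [Algebra ℂ A] [StarRing A] [StarModule ℂ A]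
    (φ : A →ₗ[ℂ] ℂ) (hφ_unital : φ 1 = 1) (hφ_pos : ∀ a, 0 ≤ φ (star a * a))
    (b : A) (hb : star b = b) (m : ℕ) (hm : 1 ≤ m) :
    Tendsto (fun N : ℕ => prodState φ N (((N : ℂ)⁻¹ • bPow b N 1) ^ m)) atTop
      (𝓝 (φ b ^ m)) :=
  commutative_law_of_large_numbers_general φ hφ_unital b m
end
end

section
/- Let G = (V,E) be a finite connected graph and, for h ≥ 1, let D^{[h]} be its h-distance matrix, the 0-1 matrix indexed by V×V with (D^{[h]})_{ξη} = 1 iff ∂_G(ξ,η) = h. For a partition λ = (j_1, j_2, …) of k (nonnegative integers with Σ_h h·j_h = k), let C(λ) ∈ M(V)^{⊗N} be the sum over all placements, of D^{[h]} at j_h distinct tensor positions for each h (with identity matrices elsewhere), of the corresponding elementary tensors. Then for every k ≥ 1 and N ≥ 1, the adjacency matrix A^{[N,k]} of the distance k-graph of G^N satisfies A^{[N,k]} = Σ_{λ ∈ Λ(k)} C(λ), where Λ(k) is the set of all partitions of k; equivalently A^{[N,k]} = A^{(N,k)} + Σ_{λ ∈ Λ(k)∖{λ_0}} C(λ), where λ_0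 = (k,0,0,…) and A^{(N,k)} = C(λ_0) = Σ_{1 ≤ i_1 < … < i_k ≤ N} D^{[1]}(i_1)···D^{[1]}(i_k). -/
open scoped Classical
open Filter Topology

noncomputable section

/-- The `N`-fold Cartesian power of a graph `G`: two vertices `x y : Fin N → V` are
adjacent iff there is exactly one index `i` with `x i` adjacent to `y i` in `G`
and `x j = y j` for all `j ≠ i`. -/
def cartPower {V : Type*} (G : SimpleGraph V) (N : ℕ) : SimpleGraph (Fin N → V) where
  Adj x y := ∃! i, G.Adj (x i) (y i) ∧ ∀ j, j ≠ i → x j = y j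
  symm := by
    constructor
    rintro x y ⟨i, ⟨hadj, hrest⟩, huniq⟩
    exact ⟨i, ⟨hadj.symm, fun j hj => (hrest j hj).symm⟩,
      fun i' ⟨hadj', hrest'⟩ => huniq i' ⟨hadj'.symm, fun j hj => (hrest' j hj).symm⟩⟩
  loopless := by
    constructor
    rintro x ⟨i, ⟨hadj, -⟩, -⟩
    exact G.loopless.irrefl _ hadj

/-- The distance `k`-graph of a graph `G`: same vertex set, with an edge `{x, y}`
whenever the graph distance of `x` and `y` in `G` equals `k`. -/
def distanceGraph {V : Type*} (G : SimpleGraph V) (k : ℕ) : SimpleGraph V where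
  Adj x y := x ≠ y ∧ G.dist x y = k
  symm := by
    constructor
    rintro x y ⟨hne, hd⟩
    exact ⟨hne.symm, by rwa [SimpleGraph.dist_comm]⟩
  loopless := by constructor; rintro x ⟨hne, -⟩; exact hne rfl

/-- `M(V)^{⊗N}` is identified with matrices indexed by `V^N × V^N`: the elementary
tensor `B_1 ⊗ ⋯ ⊗ B_N` has `(x, y)` entry `∏ i, (B i) (x i) (y i)`. -/
def elemTensor {V : Type*} [Fintype V] {N : ℕ} (B : Fin N → Matrix V V ℂ) :
    Matrix (Fin N → V) (Fin N → V) ℂ :=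
  Matrix.of fun x y => ∏ i, B i (x i) (y i)

/-- The elementary tensor with `b` at the `i`-th position and identity matrices elsewhere. -/
def matAt {V : Type*} [Fintype V] {N : ℕ} (b : Matrix V V ℂ) (i : Fin N) :
    Matrix (Fin N → V) (Fin N → V) ℂ :=
  elemTensor (Function.update (fun _ => (1 : Matrix V V ℂ)) i b)

/-- The `h`-distance matrix `D^{[h]}` of a graph: the 0-1 matrix indexed by `V × V`
whose `(ξ, η)` entry is `1` exactly when `∂_G(ξ, η) = h`. -/
def distMatrix {V : Type*} (G : SimpleGraph V) (h : ℕ) : Matrix V V ℂ :=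
  Matrix.of fun ξ η => if G.dist ξ η = h then 1 else 0

/-- `C(λ) ∈ M(V)^{⊗N}` for a partition `λ` of `k` with multiplicities `j h` of the part
`h`: the sum over all placements of `D^{[h]}` at `j h` distinct tensor positions, for
each `h ≥ 1` (with identity matrices at the remaining positions), of the corresponding
elementary tensors. A placement is encoded by a function `f : Fin N → Fin (k + 1)`,
position `i` carrying `D^{[f i]}` if `f i ≥ 1` and the identity if `f i = 0`. -/
def Cpart {V : Type*} [Fintype V] (G : SimpleGraph V) (N k : ℕ) (j : ℕ → ℕ) :
    Matrix (Fin N → V) (Fin N → V) ℂ :=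
  ∑ f ∈ Finset.univ.filter
      (fun f : Fin N → Fin (k + 1) => ∀ h : ℕ, 1 ≤ h →
        (Finset.univ.filter fun i => (f i : ℕ) = h).card = j h),
    elemTensor fun i => if (f i : ℕ) = 0 then 1 else distMatrix G (f i)

/-! The distance in `G^N` is the sum of the coordinatewise distances in `G` (one coordinate
moves per step, and shortest walks can be run one coordinate at a time). Hence the
`(x, y)` entry of `A^{[N,k]}` is `1` exactly when the distance profile
`i ↦ ∂_G(x i, y i)` sums to `k`. Reading that profile as a placement `f`, the entry of the
elementary tensor attached to `f` is `1` exactly when `f` is the profile, and every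
placement of total weight `k` lies in the placement set of exactly one partition of `k`,
namely the multiset of its nonzero values. -/

open Finset SimpleGraph

section CartPower

variable {V : Type*} {G : SimpleGraph V} {N : ℕ}

lemma cartPower_adj_update (x : Fin N → V) (i : Fin N) {a b : V} (hab : G.Adj a b) :
    (cartPower G N).Adj (Function.update x i a) (Function.update x i b) := by
  refine ⟨i, ⟨by simpa using hab, fun j hj => by simp [hj]⟩, ?_⟩
  rintro j ⟨hadj, -⟩
  by_contra hji
  simp [hji] at hadj

def cartPowerUpdateHom (x : Fin N → V) (i : Fin N) : G →g cartPower G N where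
  toFun := Function.update x i
  map_rel' := cartPower_adj_update x i

lemma cartPowerUpdateHom_apply (x : Fin N → V) (i : Fin N) (a : V) :
    cartPowerUpdateHom (G := G) x i a = Function.update x i a := rfl

lemma exists_walk_cartPower_length_eq_sum_dist (hconn : G.Connected) (s : Finset (Fin N))
    (x y : Fin N → V) (hxy : ∀ i ∉ s, x i = y i) :
    ∃ w : (cartPower G N).Walk x y, w.length = ∑ i ∈ s, G.dist (x i) (y i) := by
  induction s using Finset.induction generalizing x with
  | empty => exact ⟨Walk.nil.copy rfl (funext fun i => hxy i (notMem_empty i)), by simp⟩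
  | @insert i s hi ih =>
    obtain ⟨w₁, hw₁⟩ := hconn.exists_walk_length_eq_dist (x i) (y i)
    have hrest : ∀ j ∉ s, Function.update x i (y i) j = y j := by
      intro j hj
      by_cases hji : j = i
      · simp [hji]
      · simpa [hji] using hxy j (by simp [hji, hj])
    obtain ⟨w₂, hw₂⟩ := ih _ hrest
    obtain ⟨w₁', hw₁'⟩ : ∃ w : (cartPower G N).Walk x (Function.update x i (y i)),
        w.length = G.dist (x i) (y i) :=
      ⟨(w₁.map (cartPowerUpdateHom x i)).copy
        (by rw [cartPowerUpdateHom_apply, Function.update_eq_self]) (cartPowerUpdateHom_apply ..),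
        by simpa⟩
    refine ⟨w₁'.append w₂, ?_⟩
    rw [Walk.length_append, hw₁', hw₂, sum_insert hi]
    congr 1
    refine sum_congr rfl fun j hj => ?_
    rw [Function.update_of_ne (ne_of_mem_of_not_mem hj hi)]

lemma sum_dist_le_length_of_walk_cartPower (hconn : G.Connected) {x y : Fin N → V}
    (w : (cartPower G N).Walk x y) : ∑ i, G.dist (x i) (y i) ≤ w.length := by
  induction w with
  | nil => simp
  | @cons x z y hxz w ih =>
    obtain ⟨i, ⟨hadj, hrest⟩, -⟩ := id hxz
    have hstep : ∀ j, G.dist (x j) (y j) ≤ (if j = i then 1 else 0) + G.dist (z j) (y j) := by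
      intro j
      by_cases hji : j = i
      · subst hji
        simpa [dist_eq_one_iff_adj.mpr hadj] using
          hconn.dist_triangle (u := x j) (v := z j) (w := y j)
      · simp [hji, hrest j hji]
    calc ∑ j, G.dist (x j) (y j)
        ≤ ∑ j, ((if j = i then 1 else 0) + G.dist (z j) (y j)) := sum_le_sum fun j _ => hstep j
      _ = 1 + ∑ j, G.dist (z j) (y j) := by simp [sum_add_distrib]
      _ ≤ (Walk.cons _ w).length := by rw [Walk.length_cons]; omega

theorem dist_cartPower (hconn : G.Connected) (x y : Fin N → V) :
    (cartPower G N).dist x y = ∑ i, G.dist (x i) (y i) := by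
  obtain ⟨w, hw⟩ := exists_walk_cartPower_length_eq_sum_dist hconn univ x y (by simp)
  obtain ⟨w', hw'⟩ := Reachable.exists_walk_length_eq_dist ⟨w⟩
  exact le_antisymm (hw ▸ dist_le w) (hw' ▸ sum_dist_le_length_of_walk_cartPower hconn w')

end CartPower

lemma distanceGraph_adj_iff {V : Type*} (G : SimpleGraph V) {k : ℕ} (hk : k ≠ 0) {x y : V} :
    (distanceGraph G k).Adj x y ↔ G.dist x y = k := by
  refine ⟨And.right, fun h => ⟨?_, h⟩⟩
  rintro rfl
  exact hk (h ▸ dist_self)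

lemma Multiset.sum_filter_ne_zero {M : Type*} [AddCommMonoid M] [DecidableEq M]
    (l : Multiset M) : (l.filter (· ≠ 0)).sum = l.sum := by
  have hzero : (l.filter fun a => ¬a ≠ 0).sum = 0 :=
    Multiset.sum_eq_zero fun a ha => not_not.1 (Multiset.mem_filter.1 ha).2
  conv_rhs => rw [← Multiset.filter_add_not (· ≠ 0) l, Multiset.sum_add, hzero, add_zero]

section Placements

variable {ι : Type*} [Fintype ι] {k : ℕ}

lemma count_filter_ne_zero_map_univ (f : ι → ℕ) {h : ℕ} (hh : h ≠ 0) :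
    ((univ.val.map f).filter (· ≠ 0)).count h = #{i | f i = h} := by
  rw [Multiset.count_filter_of_pos (p := (· ≠ 0)) hh, Multiset.count_map, card, filter_val]
  exact congrArg Multiset.card (Multiset.filter_congr fun _ _ => eq_comm)

lemma card_filter_eq_count_parts_iff (f : ι → ℕ) (p : Nat.Partition k) :
    (∀ h, 1 ≤ h → #{i | f i = h} = p.parts.count h) ↔
      p.parts = (univ.val.map f).filter (· ≠ 0) := by
  refine ⟨fun H => Multiset.ext.2 fun h => ?_, fun H h hh => ?_⟩
  · rcases Nat.eq_zero_or_pos h with rfl | hh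
    · rw [Multiset.count_eq_zero.2 fun h0 => (p.parts_pos h0).false,
        Multiset.count_filter_of_neg (by simp)]
    · rw [count_filter_ne_zero_map_univ f hh.ne', H h hh]
  · rw [H, count_filter_ne_zero_map_univ f (by omega)]

lemma sum_partition_sum_placements [DecidableEq ι] {M : Type*} [AddCommMonoid M]
    (T : (ι → Fin (k + 1)) → M) :
    ∑ p : Nat.Partition k, ∑ f ∈ univ.filter (fun f : ι → Fin (k + 1) => ∀ h : ℕ, 1 ≤ h →
        (univ.filter fun i => (f i : ℕ) = h).card = p.parts.count h), T f =
      ∑ f ∈ univ.filter (fun f : ι → Fin (k + 1) => ∑ i, (f i : ℕ) = k), T f := by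
  rw [sum_comm' (s' := fun f => univ.filter fun p : Nat.Partition k =>
    p.parts = (univ.val.map fun i => (f i : ℕ)).filter (· ≠ 0))]
  · refine sum_congr rfl fun f hf => ?_
    have hsum : (univ.val.map fun i => (f i : ℕ)).sum = k := (mem_filter.1 hf).2
    rw [show univ.filter (fun p : Nat.Partition k => p.parts = _) =
        {Nat.Partition.ofSums k _ hsum} from
      ext fun p => by simp [Nat.Partition.ext_iff, Nat.Partition.ofSums], sum_singleton]
  · intro p f
    simp only [mem_univ, true_and, mem_filter, card_filter_eq_count_parts_iff]
    refine ⟨fun H => ⟨H, ?_⟩, And.left⟩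
    have hsum := p.parts_sum
    rwa [H, Multiset.sum_filter_ne_zero] at hsum

lemma sum_placements_ite_eq_profile [DecidableEq ι] {R : Type*} [Semiring R] (d : ι → ℕ) :
    ∑ f ∈ univ.filter (fun f : ι → Fin (k + 1) => ∑ i, (f i : ℕ) = k),
        (if ∀ i, d i = f i then (1 : R) else 0) =
      if ∑ i, d i = k then 1 else 0 := by
  rw [sum_boole, filter_filter]
  split_ifs with hd
  · have hle : ∀ i, d i < k + 1 := fun i =>
      Nat.lt_succ_of_le (hd ▸ single_le_sum (fun _ _ => Nat.zero_le _) (mem_univ i))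
    rw [card_eq_one.2 ⟨fun i => ⟨d i, hle i⟩, ext fun f => ?_⟩, Nat.cast_one]
    simp only [mem_filter, mem_univ, true_and, mem_singleton, funext_iff, Fin.ext_iff]
    exact ⟨fun H i => (H.2 i).symm, fun H => ⟨by simpa [H] using hd, fun i => (H i).symm⟩⟩
  · rw [card_eq_zero.2 (filter_eq_empty_iff.2 fun f _ H => hd ?_), Nat.cast_zero]
    simpa [H.2] using H.1

end Placements

section DistMatrix

variable {V : Type*} {G : SimpleGraph V}

lemma distMatrix_zero (hconn : G.Connected) : distMatrix G 0 = 1 := by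
  ext ξ η
  simp [distMatrix, Matrix.one_apply, hconn.dist_eq_zero_iff]

lemma elemTensor_distMatrix_apply [Fintype V] {N : ℕ} (d : Fin N → ℕ) (x y : Fin N → V) :
    elemTensor (fun i => distMatrix G (d i)) x y =
      if ∀ i, G.dist (x i) (y i) = d i then 1 else 0 := by
  simp [elemTensor, distMatrix, prod_boole]

end DistMatrix

theorem adjMatrix_distanceGraph_cartPower_eq_sum_Cpart_general
    {V : Type*} [Fintype V] (G : SimpleGraph V) (hconn : G.Connected)
    (k : ℕ) (hk : 1 ≤ k) (N : ℕ) :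
    (distanceGraph (cartPower G N) k).adjMatrix ℂ =
      ∑ p : Nat.Partition k, Cpart G N k fun h => Multiset.count h p.parts := by
  have hplacement : ∀ f : Fin N → Fin (k + 1),
      (fun i => if (f i : ℕ) = 0 then 1 else distMatrix G (f i)) =
        fun i => distMatrix G (f i) := by
    intro f
    funext i
    split_ifs with h
    · rw [h, distMatrix_zero hconn]
    · rfl
  ext x y
  simp only [Cpart, hplacement]
  rw [sum_partition_sum_placements, adjMatrix_apply, distanceGraph_adj_iff _ (by omega),
    dist_cartPower hconn, Matrix.sum_apply]
  simp only [elemTensor_distMatrix_apply]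
  -- `convert` only has to reconcile the `Decidable` instances of the two `if`s
  convert (sum_placements_ite_eq_profile _).symm

/-- Lemma 4.3: for a finite connected graph `G` and `k ≥ 1`, the adjacency matrix
`A^{[N,k]}` of the distance `k`-graph of `G^N` decomposes as `∑_{λ ∈ Λ(k)} C(λ)`, the
sum being over all partitions `λ` of `k` (the partition `λ` being recorded by its
multiplicity function `h ↦ j_h`). -/
theorem adjMatrix_distanceGraph_cartPower_eq_sum_Cpart
    {V : Type*} [Fintype V] [DecidableEq V] (G : SimpleGraph V) (hconn : G.Connected)
    (k : ℕ) (hk : 1 ≤ k) (N : ℕ) (hN : 1 ≤ N) :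
    (distanceGraph (cartPower G N) k).adjMatrix ℂ =
      ∑ p : Nat.Partition k, Cpart G N k fun h => Multiset.count h p.parts :=
  adjMatrix_distanceGraph_cartPower_eq_sum_Cpart_general G hconn k hk N
end
end
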